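/- Let A ∈ ℝ^{N×N} be a signed adjacency matrix that is structurally balanced with signature d, and assume the underlying graph of A is connected. Then the signed Laplacian L_s is positive semidefinite, its kernel is exactly the one-dimensional subspace spanned by d (so 0 is a simple eigenvalue), and all other eigenvalues of L_s are positive. -/

import Mathlib

/-! Structural balance means `a_ij = d_i d_j |a_ij|`, so the quadratic form of `L_s` is
`2 xᵀ L_s x = ∑ᵢⱼ |a_ij| (d_i x_i - d_j x_j)²`. This gives positive semidefiniteness and
nonnegative eigenvalues, and `L_s x = 0` exactly when `d_i x_i = d_j x_j` along every edge,
which on a connected graph means that `i ↦ d_i x_i` is constant, i.e. `x ∈ ℝ d`. -/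

open Matrix

theorem SimpleGraph.Connected.exists_forall_eq_of_forall_rel {V α : Type*} {r : V → V → Prop}
    (hconn : (SimpleGraph.fromRel r).Connected) {f : V → α} (hf : ∀ u v, r u v → f u = f v) :
    ∃ c, ∀ v, f v = c := by
  obtain ⟨v₀⟩ := hconn.nonempty
  refine ⟨f v₀, fun v => ?_⟩
  obtain ⟨w⟩ := hconn.preconnected v v₀
  induction w with
  | nil => rfl
  | cons hadj _ ih =>
    obtain ⟨-, huv | hvu⟩ := (SimpleGraph.fromRel_adj _ _ _).mp hadj
    · exact (hf _ _ huv).trans ih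
    · exact (hf _ _ hvu).symm.trans ih

theorem Matrix.PosSemidef.nonneg_of_mulVec_eq_smul {n : Type*} [Fintype n] {M : Matrix n n ℝ}
    (hM : M.PosSemidef) {μ : ℝ} {x : n → ℝ} (hx : x ≠ 0) (hμ : M *ᵥ x = μ • x) : 0 ≤ μ := by
  have hquad := hM.dotProduct_mulVec_nonneg x
  rw [hμ, dotProduct_smul, smul_eq_mul] at hquad
  exact nonneg_of_mul_nonneg_left hquad (dotProduct_star_self_pos_iff.mpr hx)

theorem eq_mul_mul_abs_of_nonneg_mul_mul {a s t : ℝ} (hs : s = 1 ∨ s = -1) (ht : t = 1 ∨ t = -1)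
    (h : 0 ≤ s * a * t) : a = s * t * |a| := by
  rcases hs with rfl | rfl <;> rcases ht with rfl | rfl <;>
    rcases abs_cases a with ⟨ha, _⟩ | ⟨ha, _⟩ <;> rw [ha] <;> linarith

section SignedLaplacian

variable {ι : Type*} [Fintype ι] [DecidableEq ι] {A : Matrix ι ι ℝ} {d : ι → ℝ}

def signedLaplacian (A : Matrix ι ι ℝ) : Matrix ι ι ℝ :=
  of fun i j => if i = j then ∑ k, |A i k| else -A i j

theorem signedLaplacian_isHermitian (hsym : A.IsSymm) : (signedLaplacian A).IsHermitian := by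
  ext i j
  by_cases h : i = j
  · simp [signedLaplacian, h]
  · simp [signedLaplacian, h, Ne.symm h, hsym.apply i j]

theorem signedLaplacian_eq_diagonal_sub (hdiag : ∀ i, A i i = 0) :
    signedLaplacian A = diagonal (fun i => ∑ k, |A i k|) - A := by
  ext i j
  by_cases h : i = j
  · simp [signedLaplacian, h, hdiag]
  · simp [signedLaplacian, h]

theorem two_mul_dotProduct_signedLaplacian_mulVec (hsym : A.IsSymm) (hdiag : ∀ i, A i i = 0)
    (hd : ∀ i, d i = 1 ∨ d i = -1) (hbal : ∀ i j, 0 ≤ d i * A i j * d j) (x : ι → ℝ) :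
    2 * (x ⬝ᵥ signedLaplacian A *ᵥ x) = ∑ i, ∑ j, |A i j| * (d i * x i - d j * x j) ^ 2 := by
  have hterm : ∀ i j, |A i j| * (d i * x i - d j * x j) ^ 2
      = |A i j| * x i ^ 2 + |A j i| * x j ^ 2 - 2 * (x i * (A i j * x j)) := by
    intro i j
    have ha := eq_mul_mul_abs_of_nonneg_mul_mul (hd i) (hd j) (hbal i j)
    have hi := mul_self_eq_one_iff.mpr (hd i)
    have hj := mul_self_eq_one_iff.mpr (hd j)
    rw [hsym.apply i j]
    linear_combination (2 * x i * x j) * ha + |A i j| * x i ^ 2 * hi + |A i j| * x j ^ 2 * hj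
  simp only [hterm, Finset.sum_add_distrib, Finset.sum_sub_distrib, ← Finset.mul_sum]
  rw [Finset.sum_comm (f := fun i j => |A j i| * x j ^ 2)]
  simp only [signedLaplacian_eq_diagonal_sub hdiag, sub_mulVec, dotProduct_sub]
  have hdiagonal : x ⬝ᵥ diagonal (fun i => ∑ k, |A i k|) *ᵥ x = ∑ i, ∑ j, |A i j| * x i ^ 2 := by
    simp only [dotProduct, mulVec_diagonal, Finset.sum_mul, Finset.mul_sum]
    exact Finset.sum_congr rfl fun i _ => Finset.sum_congr rfl fun j _ => by ring
  rw [hdiagonal]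
  simp only [dotProduct, mulVec]
  ring

theorem signedLaplacian_posSemidef (hsym : A.IsSymm) (hdiag : ∀ i, A i i = 0)
    (hd : ∀ i, d i = 1 ∨ d i = -1) (hbal : ∀ i j, 0 ≤ d i * A i j * d j) :
    (signedLaplacian A).PosSemidef := by
  refine .of_dotProduct_mulVec_nonneg (signedLaplacian_isHermitian hsym) fun x => ?_
  have h := two_mul_dotProduct_signedLaplacian_mulVec hsym hdiag hd hbal x
  have : 0 ≤ ∑ i, ∑ j, |A i j| * (d i * x i - d j * x j) ^ 2 := by positivity
  rw [star_trivial]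
  linarith

theorem signedLaplacian_mulVec_eq_zero_iff (hsym : A.IsSymm) (hdiag : ∀ i, A i i = 0)
    (hd : ∀ i, d i = 1 ∨ d i = -1) (hbal : ∀ i j, 0 ≤ d i * A i j * d j) (x : ι → ℝ) :
    signedLaplacian A *ᵥ x = 0 ↔ ∀ i j, A i j ≠ 0 → d i * x i = d j * x j := by
  have hterm_nonneg : ∀ i j, 0 ≤ |A i j| * (d i * x i - d j * x j) ^ 2 := by
    intro i j
    positivity
  rw [← (signedLaplacian_posSemidef hsym hdiag hd hbal).dotProduct_mulVec_zero_iff, star_trivial,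
    ← mul_eq_zero_iff_left two_ne_zero,
    two_mul_dotProduct_signedLaplacian_mulVec hsym hdiag hd hbal,
    Finset.sum_eq_zero_iff_of_nonneg fun i _ => Finset.sum_nonneg fun j _ => hterm_nonneg i j]
  simp only [Finset.sum_eq_zero_iff_of_nonneg fun j _ => hterm_nonneg _ j, Finset.mem_univ,
    true_imp_iff, mul_eq_zero, abs_eq_zero, pow_eq_zero_iff two_ne_zero, sub_eq_zero,
    or_iff_not_imp_left]

theorem signedLaplacian_mulVec_eq_zero_iff_exists_eq_smul (hsym : A.IsSymm)
    (hdiag : ∀ i, A i i = 0) (hd : ∀ i, d i = 1 ∨ d i = -1) (hbal : ∀ i j, 0 ≤ d i * A i j * d j)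
    (hconn : (SimpleGraph.fromRel fun i j => A i j ≠ 0).Connected) (x : ι → ℝ) :
    signedLaplacian A *ᵥ x = 0 ↔ ∃ c : ℝ, x = c • d := by
  have hdd : ∀ i, d i * d i = 1 := fun i => mul_self_eq_one_iff.mpr (hd i)
  rw [signedLaplacian_mulVec_eq_zero_iff hsym hdiag hd hbal]
  constructor
  · intro hedge
    obtain ⟨c, hc⟩ := hconn.exists_forall_eq_of_forall_rel hedge
    refine ⟨c, funext fun i => ?_⟩
    rw [Pi.smul_apply, smul_eq_mul, ← hc i]
    linear_combination (-x i) * hdd i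
  · rintro ⟨c, rfl⟩ i j -
    simp only [Pi.smul_apply, smul_eq_mul]
    linear_combination c * (hdd i - hdd j)

end SignedLaplacian

theorem signed_laplacian_SB_psd_kernel
    (N : ℕ) (A : Matrix (Fin N) (Fin N) ℝ)
    (hsym : A.IsSymm) (hdiag : ∀ i, A i i = 0)
    (d : Fin N → ℝ) (hd : ∀ i, d i = 1 ∨ d i = -1)
    (hbal : ∀ i j, 0 ≤ d i * A i j * d j)
    (hconn : (SimpleGraph.fromRel (fun i j : Fin N => A i j ≠ 0)).Connected)
    (L : Matrix (Fin N) (Fin N) ℝ)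
    (hL : ∀ i j, L i j = if i = j then ∑ k, |A i k| else -A i j) :
    L.PosSemidef ∧
    (∀ x : Fin N → ℝ, L *ᵥ x = 0 ↔ ∃ c : ℝ, x = c • d) ∧
    (∀ (μ : ℝ) (x : Fin N → ℝ), x ≠ 0 → L *ᵥ x = μ • x → μ = 0 ∨ 0 < μ) := by
  obtain rfl : L = signedLaplacian A := Matrix.ext hL
  have hpsd := signedLaplacian_posSemidef hsym hdiag hd hbal
  exact ⟨hpsd, signedLaplacian_mulVec_eq_zero_iff_exists_eq_smul hsym hdiag hd hbal hconn,
    fun μ x hx hμ => (hpsd.nonneg_of_mulVec_eq_smul hx hμ).eq_or_lt.imp Eq.symm id⟩
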